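/- Let 0 < a < b, ρ > 0, α > 0, 0 ≤ γ < 1 and φ ∈ C_{γ,ρ}[a,b] with weighted bound M = max_{x∈[a,b]} |((x^ρ-a^ρ)/ρ)^γ φ(x)|. Then for all x ∈ (a,b], |(ρJ_{a+}^α φ)(x)| ≤ M · (Γ(1-γ)/Γ(α-γ+1)) · ((x^ρ-a^ρ)/ρ)^{α-γ}. -/

import Mathlib

open Real MeasureTheory Set Filter Topology

/-- Generalized (Katugampola) fractional integral; identity for `α = 0`. -/
noncomputable def igral (ρ α a : ℝ) (φ : ℝ → ℝ) (x : ℝ) : ℝ :=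
  if α = 0 then φ x
  else ρ ^ (1 - α) / Real.Gamma α * ∫ t in a..x, t ^ (ρ - 1) * φ t * (x ^ ρ - t ^ ρ) ^ (α - 1)

/-- Generalized (Katugampola) fractional derivative of order `α ∈ (0,1)`. -/
noncomputable def genD (ρ α a : ℝ) (φ : ℝ → ℝ) (x : ℝ) : ℝ :=
  x ^ (1 - ρ) * deriv (igral ρ (1 - α) a φ) x

/-- Hilfer–Katugampola fractional derivative of order `α` and type `β`. -/
noncomputable def hkD (ρ α β a : ℝ) (φ : ℝ → ℝ) : ℝ → ℝ :=
  igral ρ (β * (1 - α)) a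
    (fun s => s ^ (1 - ρ) * deriv (igral ρ ((1 - β) * (1 - α)) a φ) s)

/-- Membership in the weighted space `C_{γ,ρ}[a,b]`. -/
def MemW (ρ γ a b : ℝ) (φ : ℝ → ℝ) : Prop :=
  ∃ h : ℝ → ℝ, ContinuousOn h (Icc a b) ∧
    ∀ x ∈ Ioc a b, h x = ((x ^ ρ - a ^ ρ) / ρ) ^ γ * φ x

/-- Weighted sup-norm on `C_{γ,ρ}[a,b]`. -/
noncomputable def wnorm (ρ γ a b : ℝ) (φ : ℝ → ℝ) : ℝ :=
  sSup ((fun x => |((x ^ ρ - a ^ ρ) / ρ) ^ γ * φ x|) '' Ioc a b)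

/-!
With `w t = (t ^ ρ - a ^ ρ) / ρ` we have `φ = w ^ (-γ) * h` on `(a, b]`, so
`|φ| ≤ M * w ^ (-γ)`. The kernel of `igral ρ α a` is nonnegative, hence
`|igral ρ α a φ x| ≤ M * igral ρ α a (w ^ (-γ)) x`. The substitution
`u = (t ^ ρ - a ^ ρ) / (x ^ ρ - a ^ ρ)` turns the last integral into `ρ ^ (α - 1) * w x ^ (α - γ)`
times the Beta integral `B(1 - γ, α) = Γ(1 - γ) Γ(α) / Γ(α - γ + 1)`.
-/

open intervalIntegral

namespace Real

theorem ofReal_betaIntegrand {p q u : ℝ} (hu : u ∈ Icc (0 : ℝ) 1) :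
    ((u ^ (p - 1) * (1 - u) ^ (q - 1) : ℝ) : ℂ) =
      (u : ℂ) ^ ((p : ℂ) - 1) * (1 - (u : ℂ)) ^ ((q : ℂ) - 1) := by
  rw [Complex.ofReal_mul, Complex.ofReal_cpow hu.1, Complex.ofReal_cpow (sub_nonneg.2 hu.2)]
  push_cast
  rfl

theorem integrableOn_betaIntegrand {p q : ℝ} (hp : 0 < p) (hq : 0 < q) :
    IntegrableOn (fun u : ℝ => u ^ (p - 1) * (1 - u) ^ (q - 1)) (Ioo 0 1) := by
  have hC := (intervalIntegrable_iff_integrableOn_Ioo_of_le zero_le_one).1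
    (Complex.betaIntegral_convergent (u := p) (v := q) (by simpa) (by simpa))
  refine IntegrableOn.congr_fun hC.re (fun u hu => ?_) measurableSet_Ioo
  rw [← ofReal_betaIntegrand (Ioo_subset_Icc_self hu)]
  rfl

theorem integral_betaIntegrand {p q : ℝ} (hp : 0 < p) (hq : 0 < q) :
    ∫ u in Ioo 0 1, u ^ (p - 1) * (1 - u) ^ (q - 1) = Gamma p * Gamma q / Gamma (p + q) := by
  have hB : Complex.betaIntegral p q =
      ((∫ u in Ioo 0 1, u ^ (p - 1) * (1 - u) ^ (q - 1) : ℝ) : ℂ) := by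
    rw [Complex.betaIntegral, integral_of_le zero_le_one, integral_Ioc_eq_integral_Ioo,
      ← integral_complex_ofReal]
    exact setIntegral_congr_fun measurableSet_Ioo
      fun u hu => (ofReal_betaIntegrand (Ioo_subset_Icc_self hu)).symm
  have h := Complex.Gamma_mul_Gamma_eq_betaIntegral (s := p) (t := q) (by simpa) (by simpa)
  rw [hB, ← Complex.ofReal_add, Complex.Gamma_ofReal, Complex.Gamma_ofReal,
    Complex.Gamma_ofReal] at h
  rw [eq_div_iff (Gamma_pos_of_pos (add_pos hp hq)).ne', mul_comm]
  exact_mod_cast h.symm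

end Real

section

variable {ρ α γ a x : ℝ}

theorem strictMonoOn_rpow_sub_div (hρ : 0 < ρ) {b c : ℝ} (hc : 0 < c) :
    StrictMonoOn (fun t => (t ^ ρ - b) / c) (Ici 0) := fun s hs t _ hst => by
  have := rpow_lt_rpow hs hst hρ
  dsimp only
  gcongr

theorem image_Ioo_rpow_sub_div (ha : 0 ≤ a) (hax : a < x) (hρ : 0 < ρ) :
    (fun t => (t ^ ρ - a ^ ρ) / (x ^ ρ - a ^ ρ)) '' Ioo a x = Ioo 0 1 := by
  have hD : 0 < x ^ ρ - a ^ ρ := sub_pos.2 (rpow_lt_rpow ha hax hρ)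
  have hcont : ContinuousOn (fun t => (t ^ ρ - a ^ ρ) / (x ^ ρ - a ^ ρ)) (Icc a x) :=
    (((continuous_rpow_const hρ.le).sub continuous_const).div_const _).continuousOn
  rw [hcont.image_Ioo_of_strictMonoOn hax.le ((strictMonoOn_rpow_sub_div hρ hD).mono
    fun t ht => ha.trans ht.1)]
  simp [hD.ne']

theorem integrableOn_and_integral_rpow_mul_comp (ha : 0 ≤ a) (hax : a < x) (hρ : 0 < ρ)
    {G : ℝ → ℝ} (hG : IntegrableOn G (Ioo 0 1)) :
    IntegrableOn (fun t => t ^ (ρ - 1) * G ((t ^ ρ - a ^ ρ) / (x ^ ρ - a ^ ρ))) (Ioo a x) ∧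
      ∫ t in Ioo a x, t ^ (ρ - 1) * G ((t ^ ρ - a ^ ρ) / (x ^ ρ - a ^ ρ)) =
        (x ^ ρ - a ^ ρ) / ρ * ∫ u in Ioo 0 1, G u := by
  set D := x ^ ρ - a ^ ρ
  have hD : 0 < D := sub_pos.2 (rpow_lt_rpow ha hax hρ)
  have hderiv : ∀ t ∈ Ioo a x, HasDerivWithinAt (fun t => (t ^ ρ - a ^ ρ) / D)
      (ρ * t ^ (ρ - 1) / D) (Ioo a x) t := fun t ht =>
    (((hasDerivAt_rpow_const (Or.inl (ha.trans_lt ht.1).ne')).sub_const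
      (a ^ ρ)).div_const D).hasDerivWithinAt
  have hinj : InjOn (fun t => (t ^ ρ - a ^ ρ) / D) (Ioo a x) :=
    ((strictMonoOn_rpow_sub_div hρ hD).mono fun t ht => ha.trans ht.1.le).injOn
  have hjac : ∀ t ∈ Ioo a x, |ρ * t ^ (ρ - 1) / D| • (D / ρ * G ((t ^ ρ - a ^ ρ) / D)) =
      t ^ (ρ - 1) * G ((t ^ ρ - a ^ ρ) / D) := fun t ht => by
    rw [abs_of_nonneg (by have := (ha.trans_lt ht.1).le; positivity), smul_eq_mul]
    field_simp
  have himg := image_Ioo_rpow_sub_div ha hax hρ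
  constructor
  · have h := integrableOn_image_iff_integrableOn_abs_deriv_smul measurableSet_Ioo hderiv hinj
      (fun u => D / ρ * G u)
    rw [himg] at h
    exact (h.1 (hG.const_mul _)).congr_fun hjac measurableSet_Ioo
  · have h := integral_image_eq_integral_abs_deriv_smul measurableSet_Ioo hderiv hinj
      (fun u => D / ρ * G u)
    rw [himg, MeasureTheory.integral_const_mul] at h
    rw [h]
    exact (setIntegral_congr_fun measurableSet_Ioo hjac).symm

theorem rpow_neg_mul_rpow_eq_betaIntegrand (ha : 0 ≤ a) (hax : a < x) (hρ : 0 < ρ) {t : ℝ}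
    (ht : t ∈ Icc a x) :
    ((t ^ ρ - a ^ ρ) / ρ) ^ (-γ) * (x ^ ρ - t ^ ρ) ^ (α - 1) =
      ((x ^ ρ - a ^ ρ) / ρ) ^ (-γ) * (ρ * ((x ^ ρ - a ^ ρ) / ρ)) ^ (α - 1) *
        (((t ^ ρ - a ^ ρ) / (x ^ ρ - a ^ ρ)) ^ (1 - γ - 1) *
          (1 - (t ^ ρ - a ^ ρ) / (x ^ ρ - a ^ ρ)) ^ (α - 1)) := by
  have hD : 0 < x ^ ρ - a ^ ρ := sub_pos.2 (rpow_lt_rpow ha hax hρ)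
  have hu0 : 0 ≤ (t ^ ρ - a ^ ρ) / (x ^ ρ - a ^ ρ) :=
    div_nonneg (sub_nonneg.2 (rpow_le_rpow ha ht.1 hρ.le)) hD.le
  have hu1 : 0 ≤ 1 - (t ^ ρ - a ^ ρ) / (x ^ ρ - a ^ ρ) := by
    rw [sub_nonneg, div_le_one hD]
    exact sub_le_sub_right (rpow_le_rpow (ha.trans ht.1) ht.2 hρ.le) _
  have hw : (t ^ ρ - a ^ ρ) / ρ =
      (x ^ ρ - a ^ ρ) / ρ * ((t ^ ρ - a ^ ρ) / (x ^ ρ - a ^ ρ)) := by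
    field_simp
  have hrest : x ^ ρ - t ^ ρ =
      ρ * ((x ^ ρ - a ^ ρ) / ρ) * (1 - (t ^ ρ - a ^ ρ) / (x ^ ρ - a ^ ρ)) := by
    field_simp
    ring
  rw [hw, hrest, mul_rpow (by positivity) hu0, mul_rpow (by positivity) hu1, sub_sub_cancel_left]
  ring

theorem integrableOn_and_integral_rpow_neg_kernel (ha : 0 ≤ a) (hax : a < x) (hρ : 0 < ρ)
    (hα : 0 < α) (hγ : γ < 1) :
    IntegrableOn
        (fun t => t ^ (ρ - 1) * ((t ^ ρ - a ^ ρ) / ρ) ^ (-γ) * (x ^ ρ - t ^ ρ) ^ (α - 1))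
        (Ioo a x) ∧
      ∫ t in Ioo a x,
          t ^ (ρ - 1) * ((t ^ ρ - a ^ ρ) / ρ) ^ (-γ) * (x ^ ρ - t ^ ρ) ^ (α - 1) =
        ρ ^ (α - 1) * (Gamma (1 - γ) * Gamma α / Gamma (α - γ + 1)) *
          ((x ^ ρ - a ^ ρ) / ρ) ^ (α - γ) := by
  have hX : 0 < (x ^ ρ - a ^ ρ) / ρ := div_pos (sub_pos.2 (rpow_lt_rpow ha hax hρ)) hρ
  have hsubst := integrableOn_and_integral_rpow_mul_comp ha hax hρ
    ((Real.integrableOn_betaIntegrand (sub_pos.2 hγ) hα).const_mul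
      (((x ^ ρ - a ^ ρ) / ρ) ^ (-γ) * (ρ * ((x ^ ρ - a ^ ρ) / ρ)) ^ (α - 1)))
  have hkernel : EqOn
      (fun t => t ^ (ρ - 1) * ((t ^ ρ - a ^ ρ) / ρ) ^ (-γ) * (x ^ ρ - t ^ ρ) ^ (α - 1))
      (fun t => t ^ (ρ - 1) *
        (((x ^ ρ - a ^ ρ) / ρ) ^ (-γ) * (ρ * ((x ^ ρ - a ^ ρ) / ρ)) ^ (α - 1) *
          (((t ^ ρ - a ^ ρ) / (x ^ ρ - a ^ ρ)) ^ (1 - γ - 1) *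
            (1 - (t ^ ρ - a ^ ρ) / (x ^ ρ - a ^ ρ)) ^ (α - 1)))) (Ioo a x) := fun t ht => by
    dsimp only
    rw [mul_assoc, rpow_neg_mul_rpow_eq_betaIntegrand ha hax hρ (Ioo_subset_Icc_self ht)]
  refine ⟨hsubst.1.congr_fun hkernel.symm measurableSet_Ioo, ?_⟩
  rw [setIntegral_congr_fun measurableSet_Ioo hkernel, hsubst.2,
    MeasureTheory.integral_const_mul, Real.integral_betaIntegrand (sub_pos.2 hγ) hα,
    mul_rpow hρ.le hX.le, show 1 - γ + α = α - γ + 1 by ring]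
  generalize (x ^ ρ - a ^ ρ) / ρ = X at hX ⊢
  have hXpow : X * (X ^ (-γ) * X ^ (α - 1)) = X ^ (α - γ) := by
    rw [← rpow_add hX, mul_comm, ← rpow_add_one hX.ne']
    ring_nf
  rw [← hXpow]
  ring

theorem abs_igral_le_mul_igral (hα : 0 < α) (hρ : 0 ≤ ρ) (ha : 0 ≤ a) (hax : a ≤ x)
    {φ g : ℝ → ℝ} {c : ℝ} (hφ : ∀ t ∈ Ioc a x, |φ t| ≤ c * g t)
    (hg : IntervalIntegrable (fun t => t ^ (ρ - 1) * g t * (x ^ ρ - t ^ ρ) ^ (α - 1))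
      volume a x) :
    |igral ρ α a φ x| ≤ c * igral ρ α a g x := by
  have hbound : ∀ t ∈ Ioc a x, ‖t ^ (ρ - 1) * φ t * (x ^ ρ - t ^ ρ) ^ (α - 1)‖ ≤
      c * (t ^ (ρ - 1) * g t * (x ^ ρ - t ^ ρ) ^ (α - 1)) := fun t ht => by
    have ht0 : 0 ≤ t := ha.trans ht.1.le
    have hxt : 0 ≤ x ^ ρ - t ^ ρ := sub_nonneg.2 (rpow_le_rpow ht0 ht.2 hρ)
    rw [norm_eq_abs, abs_mul, abs_mul, abs_of_nonneg (rpow_nonneg ht0 _),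
      abs_of_nonneg (rpow_nonneg hxt _)]
    calc _ ≤ t ^ (ρ - 1) * (c * g t) * (x ^ ρ - t ^ ρ) ^ (α - 1) :=
          mul_le_mul_of_nonneg_right (mul_le_mul_of_nonneg_left (hφ t ht) (rpow_nonneg ht0 _))
            (rpow_nonneg hxt _)
      _ = _ := by ring
  have hint := norm_integral_le_of_norm_le hax (Eventually.of_forall hbound) (hg.const_mul c)
  rw [intervalIntegral.integral_const_mul, norm_eq_abs] at hint
  have hpre : 0 ≤ ρ ^ (1 - α) / Gamma α :=
    div_nonneg (rpow_nonneg hρ _) (Gamma_pos_of_pos hα).le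
  simp only [igral, if_neg hα.ne', abs_mul, abs_of_nonneg hpre]
  calc _ ≤ ρ ^ (1 - α) / Gamma α *
          (c * ∫ t in a..x, t ^ (ρ - 1) * g t * (x ^ ρ - t ^ ρ) ^ (α - 1)) :=
        mul_le_mul_of_nonneg_left hint hpre
    _ = _ := by ring

theorem intervalIntegrable_rpow_neg_kernel (ha : 0 ≤ a) (hax : a < x) (hρ : 0 < ρ)
    (hα : 0 < α) (hγ : γ < 1) :
    IntervalIntegrable (fun t => t ^ (ρ - 1) * ((t ^ ρ - a ^ ρ) / ρ) ^ (-γ) *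
      (x ^ ρ - t ^ ρ) ^ (α - 1)) volume a x :=
  (intervalIntegrable_iff_integrableOn_Ioo_of_le hax.le).2
    (integrableOn_and_integral_rpow_neg_kernel ha hax hρ hα hγ).1

theorem igral_rpow_neg_weight (ha : 0 ≤ a) (hax : a < x) (hρ : 0 < ρ) (hα : 0 < α)
    (hγ : γ < 1) :
    igral ρ α a (fun t => ((t ^ ρ - a ^ ρ) / ρ) ^ (-γ)) x =
      Gamma (1 - γ) / Gamma (α - γ + 1) * ((x ^ ρ - a ^ ρ) / ρ) ^ (α - γ) := by
  rw [igral, if_neg hα.ne', integral_of_le hax.le, integral_Ioc_eq_integral_Ioo,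
    (integrableOn_and_integral_rpow_neg_kernel ha hax hρ hα hγ).2]
  have hρρ : ρ ^ (1 - α) * ρ ^ (α - 1) = 1 := by
    rw [← rpow_add hρ]
    norm_num
  field_simp [(Gamma_pos_of_pos hα).ne']
  rw [hρρ, one_mul]

end

theorem igral_le_bound_general (ρ a b α γ M : ℝ) (φ h : ℝ → ℝ) (ha : 0 < a)
    (hρ : 0 < ρ) (hα : 0 < α) (hγ1 : γ < 1)
    (hcont : ContinuousOn h (Icc a b))
    (hh : ∀ x ∈ Ioc a b, h x = ((x ^ ρ - a ^ ρ) / ρ) ^ γ * φ x)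
    (hM : M = sSup ((fun x => |h x|) '' Icc a b)) :
    ∀ x ∈ Ioc a b, |igral ρ α a φ x| ≤
      M * (Real.Gamma (1 - γ) / Real.Gamma (α - γ + 1)) *
        ((x ^ ρ - a ^ ρ) / ρ) ^ (α - γ) := by
  rintro x ⟨hax, hxb⟩
  have hbound : ∀ t ∈ Ioc a x, |φ t| ≤ M * ((t ^ ρ - a ^ ρ) / ρ) ^ (-γ) := fun t ht => by
    have htb : t ∈ Ioc a b := ⟨ht.1, ht.2.trans hxb⟩
    have hw : 0 < (t ^ ρ - a ^ ρ) / ρ := div_pos (sub_pos.2 (rpow_lt_rpow ha.le ht.1 hρ)) hρ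
    have hht : |h t| ≤ M := hM ▸ hcont.abs.le_sSup_image_Icc (Ioc_subset_Icc_self htb)
    rw [hh t htb, abs_mul, abs_of_pos (rpow_pos_of_pos hw _)] at hht
    rwa [rpow_neg hw.le, ← div_eq_mul_inv, le_div_iff₀' (rpow_pos_of_pos hw _)]
  calc |igral ρ α a φ x|
      ≤ M * igral ρ α a (fun t => ((t ^ ρ - a ^ ρ) / ρ) ^ (-γ)) x :=
        abs_igral_le_mul_igral hα hρ.le ha.le hax.le hbound
          (intervalIntegrable_rpow_neg_kernel ha.le hax hρ hα hγ1)
    _ = _ := by rw [igral_rpow_neg_weight ha.le hax hρ hα hγ1, mul_assoc]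

/-- Weighted bound for the generalized fractional integral. -/
theorem igral_le_bound (ρ a b α γ M : ℝ) (φ h : ℝ → ℝ) (ha : 0 < a) (hab : a < b)
    (hρ : 0 < ρ) (hα : 0 < α) (hγ0 : 0 ≤ γ) (hγ1 : γ < 1)
    (hcont : ContinuousOn h (Icc a b))
    (hh : ∀ x ∈ Ioc a b, h x = ((x ^ ρ - a ^ ρ) / ρ) ^ γ * φ x)
    (hM : M = sSup ((fun x => |h x|) '' Icc a b)) :
    ∀ x ∈ Ioc a b, |igral ρ α a φ x| ≤
      M * (Real.Gamma (1 - γ) / Real.Gamma (α - γ + 1)) *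
        ((x ^ ρ - a ^ ρ) / ρ) ^ (α - γ) :=
  igral_le_bound_general ρ a b α γ M φ h ha hρ hα hγ1 hcont hh hM
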